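/- arXiv:math/0401155 — 4 statements merged into one kernel-verified Lean document; each statement's English description precedes it below -/
import Mathlib

section
/- Every metric space (in particular, every set of reals) with the Rothberger property S1(O,O) has strong measure zero. -/
open Filter Set Cardinal

/-- The Rothberger property `S1(O,O)`: for every sequence of open covers one can select one
member from each so that the selections form a cover. -/
def RothbergerProp (X : Type*) [TopologicalSpace X] : Prop :=
  ∀ U : ℕ → Set (Set X),
    (∀ n, (∀ s ∈ U n, IsOpen s) ∧ ⋃₀ U n = Set.univ) →
    ∃ f : ℕ → Set X, (∀ n, f n ∈ U n) ∧ (⋃ n, f n) = Set.univ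

/-- The Hurewicz property `Ufin(O,Γ)`: for every sequence of open covers one can select finite
subfamilies whose unions form a γ-cover (every point is in all but finitely many of them). -/
def HurewiczProp (X : Type*) [TopologicalSpace X] : Prop :=
  ∀ U : ℕ → Set (Set X),
    (∀ n, (∀ s ∈ U n, IsOpen s) ∧ ⋃₀ U n = Set.univ) →
    ∃ F : ℕ → Set (Set X), (∀ n, F n ⊆ U n ∧ (F n).Finite) ∧
      ∀ x : X, ∀ᶠ n in atTop, x ∈ ⋃₀ F n

/-- The Menger property `Ufin(O,O)`. -/
def MengerProp (X : Type*) [TopologicalSpace X] : Prop :=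
  ∀ U : ℕ → Set (Set X),
    (∀ n, (∀ s ∈ U n, IsOpen s) ∧ ⋃₀ U n = Set.univ) →
    ∃ F : ℕ → Set (Set X), (∀ n, F n ⊆ U n ∧ (F n).Finite) ∧
      (⋃ n, ⋃₀ F n) = Set.univ

/-- The Gerlits–Nagy property `(*)_GN` = Rothberger + Hurewicz
(Kočinac–Scheepers characterization). -/
def GerlitsNagy (X : Type*) [TopologicalSpace X] : Prop :=
  RothbergerProp X ∧ HurewiczProp X

/-- Strong measure zero: for every sequence of positive reals `ε n` there is a cover
`A n` with `diam (A n) < ε n`. -/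
def StrongMeasureZero (X : Type*) [PseudoMetricSpace X] : Prop :=
  ∀ ε : ℕ → ℝ, (∀ n, 0 < ε n) →
    ∃ A : ℕ → Set X, (⋃ n, A n) = Set.univ ∧ ∀ n, EMetric.diam (A n) < ENNReal.ofReal (ε n)

/-- The bounding number `b`: least cardinality of an unbounded family in `(ℕ → ℕ, ≤*)`. -/
noncomputable def boundingNumber : Cardinal :=
  sInf { c : Cardinal | ∃ F : Set (ℕ → ℕ), #F = c ∧
    ∀ g : ℕ → ℕ, ∃ f ∈ F, ¬ ∀ᶠ n in atTop, f n ≤ g n }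

/-- `cov(M)`: least cardinality of a family of meager sets of reals covering `ℝ`. -/
noncomputable def covMeager : Cardinal :=
  sInf { c : Cardinal | ∃ S : Set (Set ℝ), #S = c ∧ (∀ A ∈ S, IsMeagre A) ∧ ⋃₀ S = Set.univ }

/-- `add(M)`: least cardinality of a family of meager sets of reals whose union is not meager. -/
noncomputable def addMeager : Cardinal :=
  sInf { c : Cardinal | ∃ S : Set (Set ℝ), #S = c ∧ (∀ A ∈ S, IsMeagre A) ∧ ¬ IsMeagre (⋃₀ S) }

/-- An ω-cover: `Set.univ ∉ U` and every finite set is contained in some member of `U`. -/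
def IsOmegaCover {X : Type*} (U : Set (Set X)) : Prop :=
  Set.univ ∉ U ∧ ∀ F : Set X, F.Finite → ∃ u ∈ U, F ⊆ u

/-- A γ-cover: an infinite family such that every point belongs to all but finitely many members. -/
def IsGammaCover {X : Type*} (U : Set (Set X)) : Prop :=
  U.Infinite ∧ ∀ x : X, {u ∈ U | x ∉ u}.Finite

/-- A family `U` is groupable (`U ∈ Ω^gp`) if it admits a partition into finite sets such that
every finite `F ⊆ X` is contained in a member of all but finitely many pieces. -/
def IsGroupable {X : Type*} (U : Set (Set X)) : Prop :=
  ∃ P : Set (Set (Set X)),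
    (∀ G ∈ P, G.Finite ∧ G.Nonempty) ∧ P.PairwiseDisjoint id ∧ ⋃₀ P = U ∧
    ∀ F : Set X, F.Finite → {G ∈ P | ¬ ∃ u ∈ G, F ⊆ u}.Finite

/-- The selection property `S1(Ω, Ω^gp)`. -/
def S1OmegaOmegaGp (X : Type*) [TopologicalSpace X] : Prop :=
  ∀ U : ℕ → Set (Set X),
    (∀ n, (∀ s ∈ U n, IsOpen s) ∧ IsOmegaCover (U n)) →
    ∃ f : ℕ → Set X, (∀ n, f n ∈ U n) ∧
      IsOmegaCover (Set.range f) ∧ IsGroupable (Set.range f)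

/-- A γ-set: every open ω-cover contains a γ-subcover. -/
def IsGammaSet (X : Type*) [TopologicalSpace X] : Prop :=
  ∀ U : Set (Set X), (∀ s ∈ U, IsOpen s) → IsOmegaCover U →
    ∃ V ⊆ U, IsGammaCover V

/-- Every metric space with the Rothberger property has strong measure zero. -/
theorem strongMeasureZero_of_rothberger (X : Type*) [MetricSpace X]
    (h : RothbergerProp X) : StrongMeasureZero X := by
  intro ε hε
  have hU : ∀ n, (∀ s ∈ {s | ∃ x : X, s = Metric.ball x (ε n / 4)}, IsOpen s) ∧
      ⋃₀ {s | ∃ x : X, s = Metric.ball x (ε n / 4)} = Set.univ := by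
    intro n
    constructor
    · rintro s ⟨x, rfl⟩; exact Metric.isOpen_ball
    · ext y
      simp only [Set.mem_sUnion, Set.mem_univ, iff_true]
      exact ⟨Metric.ball y (ε n / 4), ⟨y, rfl⟩, Metric.mem_ball_self (by linarith [hε n])⟩
  obtain ⟨f, hf, hcov⟩ := h (fun n => {s | ∃ x : X, s = Metric.ball x (ε n / 4)}) hU
  refine ⟨f, hcov, fun n => ?_⟩
  obtain ⟨x, hx⟩ := hf n
  rw [hx, ← Metric.emetric_ball]
  calc EMetric.diam (EMetric.ball x (ENNReal.ofReal (ε n / 4)))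
      ≤ 2 * ENNReal.ofReal (ε n / 4) := EMetric.diam_ball
    _ < ENNReal.ofReal (ε n) := by
        rw [show (2:ENNReal) = ENNReal.ofReal 2 by simp, ← ENNReal.ofReal_mul (by norm_num)]
        exact ENNReal.ofReal_lt_ofReal_iff_of_nonneg (by linarith [hε n]) |>.2 (by linarith [hε n])
end

section
/- Every set of reals of cardinality strictly less than the bounding number b has the Hurewicz property Ufin(O,Γ). -/
open Filter Set Cardinal

/-!
Enumerate a countable subcover of the `n`-th cover and record, for each point `x`, the index
`f x n` of a member containing `x`. Fewer than `b` functions `f x` are dominated by a single `g`,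
so the finitely many members with index at most `g n` contain `x` for almost all `n`.
-/

theorem boundingNumber_le_card_of_unbounded {F : Set (ℕ → ℕ)}
    (hF : ∀ g : ℕ → ℕ, ∃ f ∈ F, ¬ ∀ᶠ n in atTop, f n ≤ g n) :
    boundingNumber ≤ #F :=
  csInf_le' ⟨F, rfl, hF⟩

theorem exists_eventually_le_of_card_lt_boundingNumber {ι : Type} (f : ι → ℕ → ℕ)
    (hι : #ι < boundingNumber) : ∃ g : ℕ → ℕ, ∀ i, ∀ᶠ n in atTop, f i n ≤ g n := by
  by_contra! hunbdd
  refine hι.not_ge ((boundingNumber_le_card_of_unbounded (F := range f) fun g => ?_).trans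
    mk_range_le)
  obtain ⟨i, hi⟩ := hunbdd g
  exact ⟨f i, mem_range_self i, by simpa only [not_eventually, not_le] using hi⟩

theorem LindelofSpace.exists_countable_subcover {X : Type*} [TopologicalSpace X]
    [LindelofSpace X] {U : Set (Set X)} (hUo : ∀ s ∈ U, IsOpen s) (hU : ⋃₀ U = Set.univ) :
    ∃ T ⊆ U, T.Countable ∧ ∀ x, ∃ t ∈ T, x ∈ t := by
  obtain ⟨T, hTU, hTc, hT⟩ := isLindelof_univ.elim_countable_subcover_image (c := id) hUo
    (by simp only [id, ← sUnion_eq_biUnion, hU, subset_refl])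
  exact ⟨T, hTU, hTc, fun x => by simpa using hT (mem_univ x)⟩

theorem hurewiczProp_of_lindelofSpace_of_card_lt_boundingNumber (X : Type) [TopologicalSpace X]
    [LindelofSpace X] (hX : #X < boundingNumber) : HurewiczProp X := by
  intro U hU
  choose T hTU hTc hTcov using fun n => LindelofSpace.exists_countable_subcover (hU n).1 (hU n).2
  choose index hindex using fun n => countable_iff_exists_injOn.1 (hTc n)
  choose t htT hxt using hTcov
  obtain ⟨g, hg⟩ := exists_eventually_le_of_card_lt_boundingNumber
    (fun x n => index n (t n x)) hX
  refine ⟨fun n => {s ∈ T n | index n s ≤ g n}, fun n => ⟨?_, ?_⟩, fun x => ?_⟩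
  · exact fun s hs => hTU n hs.1
  · refine Finite.of_finite_image ((finite_Iic (g n)).subset ?_) ((hindex n).mono fun s hs => hs.1)
    rintro _ ⟨s, hs, rfl⟩
    exact hs.2
  · filter_upwards [hg x] with n hn
    exact ⟨t n x, ⟨htT n x, hn⟩, hxt n x⟩

/-- Every set of reals of cardinality `< b` has the Hurewicz property. -/
theorem hurewicz_of_card_lt_boundingNumber (X : Set ℝ) (h : #X < boundingNumber) :
    HurewiczProp ↥X :=
  hurewiczProp_of_lindelofSpace_of_card_lt_boundingNumber X h
end

section
/- The least cardinality of a set of reals that does not have the Hurewicz property Ufin(O,Γ) equals the bounding number b; that is, every set of reals of cardinality less than b has the Hurewicz property, and there exists a set of reals of cardinality b without the Hurewicz property. -/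
open Filter Set Cardinal

/-!
A set of size `< 𝔟` is Hurewicz: refine each open cover to a countable one and record, for each
point, the index of a member containing it. Fewer than `𝔟` index sequences are dominated by a
single `g`, and the members of index at most `g n` of the `n`-th cover are the required finite
selections.

Conversely, a Hurewicz space has `≤*`-bounded continuous images in the Baire space `ℕ → ℕ`, since
the sets `{x | φ x n ≤ m}` form open covers. The Baire space embeds into `ℝ` through the Cantor
set, so the copy of an unbounded family of size `𝔟` is not Hurewicz.
-/

open Topology

theorem exists_eventually_le_of_mk_lt_boundingNumber {F : Set (ℕ → ℕ)}
    (hF : #F < boundingNumber) : ∃ g : ℕ → ℕ, ∀ f ∈ F, ∀ᶠ n in atTop, f n ≤ g n := by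
  by_contra h
  simp only [not_exists, not_forall, exists_prop] at h
  exact hF.not_ge (csInf_le' ⟨F, rfl, h⟩)

theorem exists_unbounded_mk_eq_boundingNumber : ∃ F : Set (ℕ → ℕ), #F = boundingNumber ∧
    ∀ g : ℕ → ℕ, ∃ f ∈ F, ¬ ∀ᶠ n in atTop, f n ≤ g n := by
  have hne : {c : Cardinal | ∃ F : Set (ℕ → ℕ), #F = c ∧
      ∀ g : ℕ → ℕ, ∃ f ∈ F, ¬ ∀ᶠ n in atTop, f n ≤ g n}.Nonempty := by
    refine ⟨_, Set.univ, rfl, fun g => ⟨g + 1, mem_univ _, fun h => ?_⟩⟩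
    obtain ⟨n, hn⟩ := h.exists
    exact Nat.not_succ_le_self (g n) hn
  exact csInf_mem hne

theorem LindelofSpace.exists_choice_countable_range {X : Type*} [TopologicalSpace X]
    [LindelofSpace X] {U : Set (Set X)} (hUo : ∀ s ∈ U, IsOpen s) (hU : ⋃₀ U = Set.univ) :
    ∃ c : X → Set X, (∀ x, c x ∈ U ∧ x ∈ c x) ∧ (range c).Countable := by
  obtain ⟨V, hVU, hVc, hV⟩ := isLindelof_univ.elim_countable_subcover_image (c := id) hUo
    (by simpa [← sUnion_eq_biUnion] using hU.ge)
  have hmem : ∀ x, ∃ s ∈ V, x ∈ s := fun x => by simpa using hV (mem_univ x)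
  choose c hcV hxc using hmem
  exact ⟨c, fun x => ⟨hVU (hcV x), hxc x⟩, hVc.mono (range_subset_iff.2 hcV)⟩

theorem hurewiczProp_of_mk_lt_boundingNumber {X : Type} [TopologicalSpace X] [LindelofSpace X]
    (hX : #X < boundingNumber) : HurewiczProp X := by
  intro U hU
  have hcoding : ∀ n, ∃ (c : X → Set X) (code : Set X → ℕ),
      (∀ x, c x ∈ U n ∧ x ∈ c x) ∧ InjOn code (range c) := fun n => by
    obtain ⟨c, hc, hcount⟩ := LindelofSpace.exists_choice_countable_range (hU n).1 (hU n).2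
    obtain ⟨code, hcode⟩ := countable_iff_exists_injOn.1 hcount
    exact ⟨c, code, hc, hcode⟩
  choose c code hc hcode using hcoding
  obtain ⟨g, hg⟩ := exists_eventually_le_of_mk_lt_boundingNumber
    (F := range fun x n => code n (c n x)) (mk_range_le.trans_lt hX)
  refine ⟨fun n => {s ∈ range (c n) | code n s ≤ g n}, fun n => ⟨?_, ?_⟩, fun x => ?_⟩
  · rintro _ ⟨⟨x, rfl⟩, -⟩
    exact (hc n x).1
  · refine Finite.of_finite_image ((finite_Iic (g n)).subset ?_) ((hcode n).mono (sep_subset _ _))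
    rintro _ ⟨s, ⟨-, hs⟩, rfl⟩
    exact hs
  · filter_upwards [hg _ (mem_range_self x)] with n hn
    exact ⟨c n x, ⟨mem_range_self x, hn⟩, (hc n x).2⟩

theorem HurewiczProp.exists_eventually_le_of_continuous {X : Type*} [TopologicalSpace X]
    (hX : HurewiczProp X) {φ : X → ℕ → ℕ} (hφ : Continuous φ) :
    ∃ g : ℕ → ℕ, ∀ x, ∀ᶠ n in atTop, φ x n ≤ g n := by
  let U : ℕ → ℕ → Set X := fun n m => {x | φ x n ≤ m}
  have hUo : ∀ n m, IsOpen (U n m) := fun n m =>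
    (isOpen_discrete (Iic m)).preimage ((continuous_apply n).comp hφ)
  obtain ⟨F, hF, hγ⟩ := hX (fun n => range (U n)) fun n =>
    ⟨forall_mem_range.2 (hUo n),
      sUnion_eq_univ_iff.2 fun x => ⟨_, mem_range_self (φ x n), le_refl (φ x n)⟩⟩
  have hbound : ∀ n, ∃ m, ⋃₀ F n ⊆ U n m := fun n => by
    choose! idx hidx using fun s (hs : s ∈ F n) => (hF n).1 hs
    obtain ⟨m, hm⟩ := ((hF n).2.image idx).bddAbove
    refine ⟨m, sUnion_subset fun s hs x hx => ?_⟩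
    rw [← hidx s hs] at hx
    exact hx.out.trans (hm (mem_image_of_mem idx hs))
  choose g hg using hbound
  exact ⟨g, fun x => (hγ x).mono fun n hn => hg n hn⟩

theorem isEmbedding_decide_eq {α : Type*} [TopologicalSpace α] [DiscreteTopology α]
    [DecidableEq α] : IsEmbedding fun a : α => fun b => decide (b = a) := by
  have hcont : Continuous fun a : α => fun b => decide (b = a) := continuous_of_discreteTopology
  refine ⟨isInducing_iff_nhds.2 fun a => ?_, fun a a' h => by simpa using congrFun h a⟩
  refine le_antisymm (hcont.tendsto a).le_comap ?_
  rw [nhds_discrete α, le_pure_iff]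
  have hopen : IsOpen ((fun y : α → Bool => y a) ⁻¹' {true}) :=
    (isOpen_discrete _).preimage (continuous_apply a)
  exact mem_comap.2 ⟨_, hopen.mem_nhds (by simp), fun b hb => by simpa [eq_comm] using hb⟩

theorem exists_isEmbedding_baireSpace_real : ∃ e : (ℕ → ℕ) → ℝ, IsEmbedding e :=
  ⟨Subtype.val ∘ cantorSetHomeomorphNatToBool.symm ∘ cantorSpaceHomeomorphNatToCantorSpace.symm ∘
      Pi.map fun _ => fun a b => decide (b = a),
    IsEmbedding.subtypeVal.comp <| cantorSetHomeomorphNatToBool.symm.isEmbedding.comp <|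
      cantorSpaceHomeomorphNatToCantorSpace.symm.isEmbedding.comp <|
        .piMap fun _ => isEmbedding_decide_eq⟩

theorem exists_not_hurewiczProp_mk_eq_boundingNumber :
    ∃ X : Set ℝ, #X = boundingNumber ∧ ¬ HurewiczProp X := by
  obtain ⟨F, hFcard, hFunb⟩ := exists_unbounded_mk_eq_boundingNumber
  obtain ⟨e, he⟩ := exists_isEmbedding_baireSpace_real
  have heF : IsEmbedding (e ∘ (Subtype.val : F → ℕ → ℕ)) := he.comp .subtypeVal
  refine ⟨range (e ∘ Subtype.val), by rw [mk_range_eq _ heF.injective, hFcard], fun hH => ?_⟩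
  obtain ⟨g, hg⟩ := hH.exists_eventually_le_of_continuous
    (continuous_subtype_val.comp heF.toHomeomorph.symm.continuous)
  obtain ⟨f, hf, hfg⟩ := hFunb g
  exact hfg (by simpa using hg (heF.toHomeomorph ⟨f, hf⟩))

/-- `non(Ufin(O,Γ)) = b`. -/
theorem non_hurewicz_eq_boundingNumber :
    (∀ X : Set ℝ, #X < boundingNumber → HurewiczProp ↥X) ∧
      (∃ X : Set ℝ, #X = boundingNumber ∧ ¬ HurewiczProp ↥X) :=
  ⟨fun _ => hurewiczProp_of_mk_lt_boundingNumber, exists_not_hurewiczProp_mk_eq_boundingNumber⟩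
end

section
/- Every set of reals with the Rothberger property S1(O,O) is countable if and only if every strong measure zero set of reals is countable. -/
/-!
Rothberger sets are strong measure zero, which gives one implication. For the other, suppose every
Rothberger set of reals is countable.

If some unbounded family in `(ℕ → ℕ, ≤*)` has size `ℵ₁` (that is, `𝔟 = ℵ₁`), it can be refined to
an unbounded family `H` of strictly increasing functions whose `≤*`-bounded parts are all
countable. Coding each `h ∈ H` by the indicator of its range and adding the indicators of finite
sets gives a subset of Cantor space concentrated on the countable set of finite sets: an open set
containing all finite sets misses only codes of functions dominated by one fixed function. Its
image under the Cantor embedding into `ℝ` is an uncountable Rothberger set.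

If `𝔟 > ℵ₁`, every set of `ℵ₁` reals is Hurewicz: the functions recording how far along a
countable subcover one must go to reach a point are dominated. A Hurewicz set of reals lies in a
σ-compact set inside any `G_δ` superset, and the Lebesgue numbers of the compact pieces turn strong
measure zero into the Rothberger property. So an uncountable strong measure zero set would contain
a Rothberger set of size `ℵ₁`.
-/

open Filter Set Cardinal

section StrongMeasureZero

variable {X Y : Type*} [PseudoMetricSpace X] [PseudoMetricSpace Y]

theorem strongMeasureZero_of_rothbergerProp (h : RothbergerProp X) : StrongMeasureZero X := by
  intro ε hε
  let U n : Set (Set X) := {s | IsOpen s ∧ Metric.ediam s < ENNReal.ofReal (ε n)}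
  have hcov n : (∀ s ∈ U n, IsOpen s) ∧ ⋃₀ U n = Set.univ := by
    refine ⟨fun s hs => hs.1, eq_univ_of_forall fun x =>
      ⟨Metric.ball x (ε n / 3), ⟨Metric.isOpen_ball, ?_⟩, Metric.mem_ball_self (by linarith [hε n])⟩⟩
    refine (Metric.ediam_le_of_forall_dist_le (C := 2 * (ε n / 3)) fun y hy z hz => ?_).trans_lt
      ((ENNReal.ofReal_lt_ofReal_iff (hε n)).mpr (by linarith [hε n]))
    linarith [dist_triangle y x z, Metric.mem_ball.mp hy, Metric.mem_ball'.mp hz]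
  obtain ⟨f, hfU, hf⟩ := h U hcov
  exact ⟨f, hf, fun n => (hfU n).2⟩

theorem StrongMeasureZero.of_isometry (h : StrongMeasureZero X) {f : Y → X} (hf : Isometry f) :
    StrongMeasureZero Y := by
  intro ε hε
  obtain ⟨A, hA, hdiam⟩ := h ε hε
  refine ⟨fun n => f ⁻¹' A n, by rw [← preimage_iUnion, hA, preimage_univ], fun n => ?_⟩
  calc Metric.ediam (f ⁻¹' A n) = Metric.ediam (f '' (f ⁻¹' A n)) := (hf.ediam_image _).symm
    _ ≤ Metric.ediam (A n) := Metric.ediam_mono (image_preimage_subset f (A n))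
    _ < ENNReal.ofReal (ε n) := hdiam n

end StrongMeasureZero

section Hurewicz

variable {X : Type*} [TopologicalSpace X] [LindelofSpace X]

theorem exists_seq_subcover [Nonempty X] {U : Set (Set X)} (hUo : ∀ s ∈ U, IsOpen s)
    (hU : ⋃₀ U = Set.univ) : ∃ u : ℕ → Set X, (∀ k, u k ∈ U) ∧ ∀ x, ∃ k, x ∈ u k := by
  obtain ⟨V, hVU, hVc, hV⟩ := isLindelof_univ.elim_countable_subcover_image (c := id) hUo
    (by simpa [← sUnion_eq_biUnion] using hU.ge)
  obtain ⟨u, rfl⟩ := hVc.exists_eq_range <| by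
    obtain ⟨x⟩ := ‹Nonempty X›
    obtain ⟨s, hs, -⟩ := mem_iUnion₂.mp (hV (mem_univ x))
    exact ⟨s, hs⟩
  refine ⟨u, fun k => hVU (mem_range_self k), fun x => ?_⟩
  simpa using hV (mem_univ x)

theorem hurewiczProp_of_forall_bounded
    (hdom : ∀ g : X → ℕ → ℕ, ∃ g₀ : ℕ → ℕ, ∀ x, g x ≤ᶠ[atTop] g₀) : HurewiczProp X := by
  intro U hU
  cases isEmpty_or_nonempty X
  · exact ⟨fun _ => ∅, fun _ => ⟨empty_subset _, finite_empty⟩, fun x => isEmptyElim x⟩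
  choose u huU hu using fun n => exists_seq_subcover (hU n).1 (hU n).2
  choose g hg using hu
  obtain ⟨g₀, hg₀⟩ := hdom fun x n => g n x
  refine ⟨fun n => u n '' Iic (g₀ n), fun n => ⟨image_subset_iff.mpr fun k _ => huU n k,
    (finite_Iic _).image _⟩, fun x => (hg₀ x).mono fun n hn => ?_⟩
  exact ⟨u n (g n x), mem_image_of_mem _ hn, hg n x⟩

end Hurewicz

theorem HurewiczProp.exists_isCompact_cover {α : Type*} [TopologicalSpace α]
    [LocallyCompactSpace α] [RegularSpace α] {X : Set α} (hH : HurewiczProp X) {G : ℕ → Set α}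
    (hG : ∀ n, IsOpen (G n)) (hXG : ∀ n, X ⊆ G n) :
    ∃ K : ℕ → Set α, (∀ m, IsCompact (K m)) ∧ X ⊆ ⋃ m, K m ∧ ∀ m n, K m ⊆ G n := by
  let C k : Set (Set X) := {s | IsOpen s ∧ IsCompact (closure ((↑) '' s : Set α)) ∧
    ∀ j ≤ k, closure ((↑) '' s : Set α) ⊆ G j}
  have hC k : (∀ s ∈ C k, IsOpen s) ∧ ⋃₀ C k = Set.univ := by
    refine ⟨fun s hs => hs.1, eq_univ_of_forall fun x => ?_⟩
    obtain ⟨V, hVo, hxV, hVG, hVc⟩ := exists_open_between_and_isCompact_closure isCompact_singleton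
      ((finite_Iic k).isOpen_biInter fun j _ => hG j)
      (singleton_subset_iff.mpr (mem_iInter₂.mpr fun j _ => hXG j x.2))
    have hsub : closure ((↑) '' ((↑) ⁻¹' V : Set X) : Set α) ⊆ closure V :=
      closure_mono (image_preimage_subset _ _)
    exact ⟨(↑) ⁻¹' V, ⟨hVo.preimage continuous_subtype_val,
      hVc.of_isClosed_subset isClosed_closure hsub,
      fun j hj => hsub.trans (hVG.trans (biInter_subset_of_mem hj))⟩, hxV rfl⟩
  obtain ⟨F, hFC, hF⟩ := hH C hC
  let B k := ⋃ s ∈ F k, closure ((↑) '' s : Set α)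
  have hBc k : IsCompact (B k) := (hFC k).2.isCompact_biUnion fun s hs => ((hFC k).1 hs).2.1
  have hBcl k : IsClosed (B k) := (hFC k).2.isClosed_biUnion fun s _ => isClosed_closure
  have hBG k j (hj : j ≤ k) : B k ⊆ G j := iUnion₂_subset fun s hs => ((hFC k).1 hs).2.2 j hj
  let K m := closure ((↑) '' {x : X | ∀ k ≥ m, x ∈ ⋃₀ F k} : Set α)
  have hKB m k (hk : m ≤ k) : K m ⊆ B k := by
    refine closure_minimal ?_ (hBcl k)
    rintro _ ⟨x, hx, rfl⟩
    obtain ⟨s, hs, hxs⟩ := hx k hk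
    exact mem_biUnion hs (subset_closure ⟨x, hxs, rfl⟩)
  refine ⟨K, fun m => (hBc m).of_isClosed_subset isClosed_closure (hKB m m le_rfl),
    fun x hx => ?_, fun m n => (hKB m _ (le_max_left m n)).trans (hBG _ n (le_max_right m n))⟩
  obtain ⟨m, hm⟩ := eventually_atTop.mp (hF ⟨x, hx⟩)
  exact mem_iUnion.mpr ⟨m, subset_closure ⟨⟨x, hx⟩, hm, rfl⟩⟩

section Selection

variable {α : Type*} [PseudoMetricSpace α]

theorem exists_mem_superset_of_ediam_lt {𝒰 : Set (Set α)} (hne : 𝒰.Nonempty) {K A : Set α}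
    {δ : ℝ} (hδ : ∀ y ∈ K, ∃ T ∈ 𝒰, Metric.ball y δ ⊆ T) (hAK : A ⊆ K)
    (hA : Metric.ediam A < ENNReal.ofReal δ) : ∃ T ∈ 𝒰, A ⊆ T := by
  rcases A.eq_empty_or_nonempty with rfl | ⟨y, hy⟩
  · exact hne.imp fun T hT => ⟨hT, empty_subset T⟩
  obtain ⟨T, hT, hyT⟩ := hδ y (hAK hy)
  refine ⟨T, hT, fun x hx => hyT ?_⟩
  rw [Metric.mem_ball, ← edist_lt_ofReal]
  exact (Metric.edist_le_ediam_of_mem hx hy).trans_lt hA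

theorem StrongMeasureZero.exists_cover_subordinate {X : Set α} (hS : StrongMeasureZero X)
    {K : ℕ → Set α} (hXK : X ⊆ ⋃ m, K m) (δ : ℕ → ℕ → ℝ) (hδ : ∀ m n, 0 < δ m n) :
    ∃ A : ℕ → Set α, X ⊆ ⋃ n, A n ∧
      ∀ n, ∃ m, A n ⊆ K m ∧ Metric.ediam (A n) < ENNReal.ofReal (δ m n) := by
  -- Cover `X` once for every `m`, using the radii `δ m n` along the `m`-th column of `Nat.pair`.
  choose A hAcov hAdiam using fun m => hS (fun j => δ m (Nat.pair m j)) fun j => hδ m _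
  refine ⟨fun n => (↑) '' A n.unpair.1 n.unpair.2 ∩ K n.unpair.1, fun x hx => ?_,
    fun n => ⟨n.unpair.1, inter_subset_right, ?_⟩⟩
  · obtain ⟨m, hxm⟩ := mem_iUnion.mp (hXK hx)
    obtain ⟨j, hj⟩ := mem_iUnion.mp ((hAcov m).symm ▸ mem_univ (⟨x, hx⟩ : X))
    exact mem_iUnion.mpr ⟨Nat.pair m j, by simpa using ⟨⟨hx, hj⟩, hxm⟩⟩
  · calc Metric.ediam ((↑) '' A n.unpair.1 n.unpair.2 ∩ K n.unpair.1)
        ≤ Metric.ediam ((↑) '' A n.unpair.1 n.unpair.2 : Set α) :=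
          Metric.ediam_mono inter_subset_left
      _ = Metric.ediam (A n.unpair.1 n.unpair.2) := isometry_subtype_coe.ediam_image _
      _ < ENNReal.ofReal (δ n.unpair.1 n) := by
        have h := hAdiam n.unpair.1 n.unpair.2
        rwa [Nat.pair_unpair] at h

theorem StrongMeasureZero.exists_selection_cover {X : Set α} (hS : StrongMeasureZero X)
    {K : ℕ → Set α} (hK : ∀ m, IsCompact (K m)) (hXK : X ⊆ ⋃ m, K m) {𝒰 : ℕ → Set (Set α)}
    (h𝒰 : ∀ n, ∀ T ∈ 𝒰 n, IsOpen T) (hK𝒰 : ∀ m n, K m ⊆ ⋃₀ 𝒰 n) (hne : ∀ n, (𝒰 n).Nonempty) :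
    ∃ T : ℕ → Set α, (∀ n, T n ∈ 𝒰 n) ∧ X ⊆ ⋃ n, T n := by
  choose δ hδpos hδ using fun m n =>
    lebesgue_number_lemma_of_metric_sUnion (hK m) (h𝒰 n) (hK𝒰 m n)
  obtain ⟨A, hXA, hA⟩ := hS.exists_cover_subordinate hXK δ hδpos
  have hT n : ∃ T ∈ 𝒰 n, A n ⊆ T := by
    obtain ⟨m, hAK, hAδ⟩ := hA n
    exact exists_mem_superset_of_ediam_lt (hne n) (hδ m n) hAK hAδ
  choose T hT𝒰 hAT using hT
  exact ⟨T, hT𝒰, hXA.trans (iUnion_mono hAT)⟩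

theorem rothbergerProp_of_hurewiczProp_of_strongMeasureZero [ProperSpace α] {X : Set α}
    [Nonempty X] (hH : HurewiczProp X) (hS : StrongMeasureZero X) : RothbergerProp X := by
  intro U hU
  let 𝒰 n : Set (Set α) := {T | IsOpen T ∧ (↑) ⁻¹' T ∈ U n}
  have hX𝒰 n : X ⊆ ⋃₀ 𝒰 n := fun x hx => by
    obtain ⟨s, hs, hxs⟩ := mem_sUnion.mp ((hU n).2.symm ▸ mem_univ (⟨x, hx⟩ : X))
    obtain ⟨T, hT, rfl⟩ := isOpen_induced_iff.mp ((hU n).1 s hs)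
    exact ⟨T, ⟨hT, hs⟩, hxs⟩
  obtain ⟨K, hK, hXK, hK𝒰⟩ :=
    hH.exists_isCompact_cover (fun n => isOpen_sUnion fun T hT => hT.1) hX𝒰
  have hne n : (𝒰 n).Nonempty := by
    obtain ⟨x⟩ := ‹Nonempty X›
    obtain ⟨T, hT, -⟩ := hX𝒰 n x.2
    exact ⟨T, hT⟩
  obtain ⟨T, hT, hXT⟩ := hS.exists_selection_cover hK hXK (fun n T hT => hT.1) hK𝒰 hne
  exact ⟨fun n => (↑) ⁻¹' T n, fun n => (hT n).2, eq_univ_of_forall fun x => by simpa using hXT x.2⟩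

end Selection

theorem Set.Countable.exists_strictMono_eventuallyLE {s : Set (ℕ → ℕ)} (hs : s.Countable) :
    ∃ g : ℕ → ℕ, StrictMono g ∧ ∀ f ∈ s, f ≤ᶠ[atTop] g := by
  obtain ⟨u, hu⟩ := countable_iff_exists_subset_range.mp hs
  -- `g n` exceeds `u i n` for every `i ≤ n`, and the `+ 1` makes it strictly increasing.
  let g n := ∑ k ∈ Finset.range (n + 1), (∑ i ∈ Finset.range (k + 1), u i k + 1)
  refine ⟨g, strictMono_nat_of_lt_succ fun n => ?_, fun f hf => ?_⟩
  · simp only [g, Finset.sum_range_succ _ (n + 1)]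
    omega
  obtain ⟨i, rfl⟩ := hu hf
  filter_upwards [eventually_ge_atTop i] with n hin
  calc u i n ≤ ∑ i ∈ Finset.range (n + 1), u i n :=
        Finset.single_le_sum (f := fun j => u j n) (fun _ _ => Nat.zero_le _)
          (Finset.mem_range.mpr (Nat.lt_succ_of_le hin))
    _ ≤ g n := le_trans (Nat.le_succ _) <|
        Finset.single_le_sum (f := fun k => ∑ i ∈ Finset.range (k + 1), u i k + 1)
          (fun _ _ => Nat.zero_le _) (Finset.self_mem_range_succ n)

theorem not_countable_of_unbounded {H : Set (ℕ → ℕ)} (h : ∀ g : ℕ → ℕ, ∃ f ∈ H, ¬ f ≤ᶠ[atTop] g) :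
    ¬ H.Countable := fun hc =>
  let ⟨g, _, hg⟩ := hc.exists_strictMono_eventuallyLE
  let ⟨f, hf, hfg⟩ := h g
  hfg (hg f hf)

theorem exists_unbounded_strictMono_of_mk_le_aleph_one {F : Set (ℕ → ℕ)} (hF : #F ≤ ℵ₁)
    (hunb : ∀ g : ℕ → ℕ, ∃ f ∈ F, ¬ f ≤ᶠ[atTop] g) :
    ∃ H : Set (ℕ → ℕ), (∀ h ∈ H, StrictMono h) ∧ (∀ g : ℕ → ℕ, ∃ h ∈ H, ¬ h ≤ᶠ[atTop] g) ∧
      ∀ g : ℕ → ℕ, {h ∈ H | h ≤ᶠ[atTop] g}.Countable := by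
  obtain ⟨e⟩ : Nonempty (F ↪ (ℵ₁ : Cardinal).ord.ToType) := by
    rwa [← Cardinal.le_def, Cardinal.mk_toType, Cardinal.card_ord]
  have hIio (f : F) : {f' : F | e f' < e f}.Countable := by
    have : (Iio (e f)).Countable := by
      rw [← le_aleph0_iff_set_countable, ← lt_aleph_one_iff]
      simpa using Cardinal.mk_Iio_lt (e f) (by simp)
    exact this.preimage e.injective
  have hIic (f : F) : {f' : F | e f' ≤ e f}.Countable := by
    refine ((hIio f).insert f).mono fun f' (h : e f' ≤ e f) => ?_
    rcases h.lt_or_eq with h | h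
    · exact .inr h
    · exact .inl (e.injective h)
  -- `d f` dominates every member of `F` enumerated no later than `f`.
  choose d hdmono hd using fun f : F => ((hIic f).image (↑)).exists_strictMono_eventuallyLE
  have hfd {f f' : F} (h : e f' ≤ e f) : (f' : ℕ → ℕ) ≤ᶠ[atTop] d f := hd f _ ⟨f', h, rfl⟩
  refine ⟨range d, forall_mem_range.mpr hdmono, fun g => ?_, fun g => ?_⟩
  · obtain ⟨f, hf, hfg⟩ := hunb g
    exact ⟨d ⟨f, hf⟩, mem_range_self _, fun hdg => hfg ((hfd le_rfl).trans hdg)⟩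
  · obtain ⟨f₀, hf₀, hf₀g⟩ := hunb g
    refine ((hIio ⟨f₀, hf₀⟩).image d).mono ?_
    rintro _ ⟨⟨f, rfl⟩, hfg⟩
    exact ⟨f, lt_of_not_ge fun hle => hf₀g ((hfd hle).trans hfg), rfl⟩

def IsConcentratedOn {α : Type*} [TopologicalSpace α] (X D : Set α) : Prop :=
  ∀ U, IsOpen U → D ⊆ U → (X \ U).Countable

section Concentrated

variable {α β : Type*} [TopologicalSpace α] [TopologicalSpace β]

theorem IsConcentratedOn.image {X D : Set α} (h : IsConcentratedOn X D) {f : α → β}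
    (hf : Continuous f) : IsConcentratedOn (f '' X) (f '' D) := by
  intro U hU hDU
  refine ((h _ (hU.preimage hf) (image_subset_iff.mp hDU)).image f).mono ?_
  rintro _ ⟨⟨x, hx, rfl⟩, hxU⟩
  exact ⟨x, ⟨hx, hxU⟩, rfl⟩

theorem IsConcentratedOn.preimage_val {X D : Set α} (h : IsConcentratedOn X D) (hDX : D ⊆ X) :
    IsConcentratedOn (Set.univ : Set X) ((↑) ⁻¹' D) := by
  intro U hU hDU
  obtain ⟨T, hT, rfl⟩ := isOpen_induced_iff.mp hU
  have hDT : D ⊆ T := fun x hx => hDU (show (⟨x, hDX hx⟩ : X) ∈ (↑) ⁻¹' D from hx)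
  exact ((h T hT hDT).preimage Subtype.val_injective).mono fun x hx => (⟨x.2, hx.2⟩ : _ ∧ _)

theorem exists_selection_cover_of_countable {X : Type*} [Nonempty X] {U : ℕ → Set (Set X)}
    (hU : ∀ n, ⋃₀ U n = Set.univ) {S : Set X} (hS : S.Countable) :
    ∃ f : ℕ → Set X, (∀ n, f n ∈ U n) ∧ S ⊆ ⋃ n, f n := by
  obtain ⟨x, hSx⟩ := countable_iff_exists_subset_range.mp hS
  have hx : ∀ n, ∃ s ∈ U n, x n ∈ s := fun n =>
    mem_sUnion.mp ((hU n).symm ▸ mem_univ (x n))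
  choose f hfU hxf using hx
  exact ⟨f, hfU, fun y hy => by obtain ⟨n, rfl⟩ := hSx hy; exact mem_iUnion.mpr ⟨n, hxf n⟩⟩

theorem exists_selection_cover_union {X : Type*} {U : ℕ → Set (Set X)} {A B : Set X}
    (hA : ∃ f : ℕ → Set X, (∀ n, f n ∈ U (2 * n)) ∧ A ⊆ ⋃ n, f n)
    (hB : ∃ g : ℕ → Set X, (∀ n, g n ∈ U (2 * n + 1)) ∧ B ⊆ ⋃ n, g n) :
    ∃ h : ℕ → Set X, (∀ n, h n ∈ U n) ∧ A ∪ B ⊆ ⋃ n, h n := by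
  obtain ⟨f, hfU, hAf⟩ := hA
  obtain ⟨g, hgU, hBg⟩ := hB
  let e := Equiv.natSumNatEquivNat
  refine ⟨Sum.elim f g ∘ e.symm, fun n => ?_, union_subset ?_ ?_⟩
  · obtain ⟨k | k, rfl⟩ := e.surjective n
    · simpa [e] using hfU k
    · simpa [e] using hgU k
  · exact hAf.trans (iUnion_subset fun k => subset_iUnion_of_subset (e (.inl k)) (by simp))
  · exact hBg.trans (iUnion_subset fun k => subset_iUnion_of_subset (e (.inr k)) (by simp))

theorem rothbergerProp_of_isConcentratedOn {X : Type*} [TopologicalSpace X] [Nonempty X]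
    {D : Set X} (hD : D.Countable) (h : IsConcentratedOn Set.univ D) : RothbergerProp X := by
  intro U hU
  obtain ⟨f, hfU, hDf⟩ := exists_selection_cover_of_countable (fun n => (hU (2 * n)).2) hD
  have hrest := h _ (isOpen_iUnion fun n => (hU (2 * n)).1 _ (hfU n)) hDf
  obtain ⟨sel, hselU, hcov⟩ := exists_selection_cover_union ⟨f, hfU, subset_rfl⟩
    (exists_selection_cover_of_countable (fun n => (hU (2 * n + 1)).2) hrest)
  rw [union_sdiff_self, union_univ] at hcov
  exact ⟨sel, hselU, univ_subset_iff.mp hcov⟩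

end Concentrated

theorem exists_forall_lt_eq_mem_of_isOpen {β : Type*} [TopologicalSpace β] {U : Set (ℕ → β)}
    (hU : IsOpen U) {x : ℕ → β} (hx : x ∈ U) : ∃ m, ∀ y, (∀ n < m, y n = x n) → y ∈ U := by
  obtain ⟨I, u, hu, hIU⟩ := isOpen_pi_iff.mp hU x hx
  refine ⟨I.sup id + 1, fun y hy => hIU fun a ha => ?_⟩
  rw [hy a (Nat.lt_succ_of_le (Finset.le_sup (f := id) ha))]
  exact (hu a ha).2

def finsetIndicators : Set (ℕ → Bool) := range fun s : Finset ℕ => (s : Set ℕ).boolIndicator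

theorem exists_blocks_of_finsetIndicators_subset {U : Set (ℕ → Bool)} (hU : IsOpen U)
    (hDU : finsetIndicators ⊆ U) :
    ∃ M : ℕ → ℕ, ∀ S : Set ℕ, S.boolIndicator ∉ U → ∀ k, ∃ n ∈ S, M k ≤ n ∧ n < M (k + 1) := by
  classical
  choose m hm using fun s : Finset ℕ => exists_forall_lt_eq_mem_of_isOpen hU (hDU ⟨s, rfl⟩)
  -- `M (k + 1)` is large enough to decide membership in `U` for every set with no points in
  -- `[M k, M (k + 1))`.
  let M : ℕ → ℕ := fun k =>
    Nat.rec (motive := fun _ => ℕ) 0 (fun _ Mk => (Finset.range Mk).powerset.sup m) k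
  refine ⟨M, fun S hS k => ?_⟩
  by_contra! hgap
  let s := (Finset.range (M k)).filter (· ∈ S)
  have hms : m s ≤ M (k + 1) := Finset.le_sup (Finset.mem_powerset.mpr (Finset.filter_subset _ _))
  refine hS (hm s S.boolIndicator fun n hn => ?_)
  rw [Bool.eq_iff_iff, ← mem_iff_boolIndicator, ← mem_iff_boolIndicator]
  by_cases hnk : n < M k
  · simp [s, hnk]
  · have hnS : n ∉ S := fun h => by have := hgap n h (not_lt.mp hnk); omega
    simp [s, hnk, hnS]

theorem StrictMono.lt_of_forall_exists_mem_Ico {f : ℕ → ℕ} (hf : StrictMono f) {M : ℕ → ℕ}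
    (h : ∀ k, ∃ j, M k ≤ f j ∧ f j < M (k + 1)) (k : ℕ) : f k < M (k + 1) := by
  induction k with
  | zero =>
    obtain ⟨j, -, hj⟩ := h 0
    exact (hf.monotone (Nat.zero_le j)).trans_lt hj
  | succ k ih =>
    obtain ⟨j, hj₁, hj₂⟩ := h (k + 1)
    exact (hf.monotone (hf.lt_iff_lt.mp (ih.trans_le hj₁))).trans_lt hj₂

theorem isConcentratedOn_boolIndicator_range {H : Set (ℕ → ℕ)} (hmono : ∀ h ∈ H, StrictMono h)
    (hbdd : ∀ g : ℕ → ℕ, {h ∈ H | h ≤ᶠ[atTop] g}.Countable) :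
    IsConcentratedOn ((fun h => (range h).boolIndicator) '' H ∪ finsetIndicators)
      finsetIndicators := by
  intro U hU hDU
  obtain ⟨M, hM⟩ := exists_blocks_of_finsetIndicators_subset hU hDU
  refine ((hbdd fun k => M (k + 1)).image fun h => (range h).boolIndicator).mono ?_
  rintro _ ⟨⟨h, hh, rfl⟩ | hxD, hxU⟩
  · refine ⟨h, ⟨hh, .of_forall fun k => ((hmono h hh).lt_of_forall_exists_mem_Ico ?_ k).le⟩, rfl⟩
    intro k
    obtain ⟨_, ⟨j, rfl⟩, hj⟩ := hM _ hxU k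
    exact ⟨j, hj⟩
  · exact absurd (hDU hxD) hxU

theorem continuous_cantorFunction {c : ℝ} (h0 : 0 ≤ c) (h1 : c < 1) :
    Continuous (Cardinal.cantorFunction c) := by
  refine continuous_tsum (fun n => ?_) (summable_geometric_of_lt_one h0 h1) fun n f => ?_
  · exact (continuous_of_discreteTopology (f := fun b : Bool => cond b (c ^ n) 0)).comp
      (continuous_apply n)
  · cases hfn : f n <;> simp [Cardinal.cantorFunctionAux, hfn, abs_of_nonneg h0, pow_nonneg h0 n]

theorem exists_uncountable_rothbergerProp_of_unbounded {F : Set (ℕ → ℕ)} (hF : #F ≤ ℵ₁)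
    (hunb : ∀ g : ℕ → ℕ, ∃ f ∈ F, ¬ f ≤ᶠ[atTop] g) :
    ∃ X : Set ℝ, RothbergerProp X ∧ ¬ X.Countable := by
  obtain ⟨H, hmono, hHunb, hbdd⟩ := exists_unbounded_strictMono_of_mk_le_aleph_one hF hunb
  let E := Cardinal.cantorFunction (1 / 3)
  let code : (ℕ → ℕ) → ℕ → Bool := fun h => (range h).boolIndicator
  have hcode : InjOn (E ∘ code) H := by
    intro h hh h' hh' heq
    have hind : (range h).boolIndicator = (range h').boolIndicator :=
      Cardinal.cantorFunction_injective (by norm_num) (by norm_num) heq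
    have hrange : range h = range h' := by
      ext n
      rw [mem_iff_boolIndicator, mem_iff_boolIndicator, hind]
    exact ((hmono h hh).range_inj (hmono h' hh')).mp hrange
  refine ⟨E '' (code '' H ∪ finsetIndicators), ?_, fun hc => not_countable_of_unbounded hHunb ?_⟩
  · have : Nonempty (E '' (code '' H ∪ finsetIndicators)) :=
      ⟨_, mem_image_of_mem E (Or.inr ⟨∅, rfl⟩)⟩
    exact rothbergerProp_of_isConcentratedOn
      (((countable_range _).image E).preimage Subtype.val_injective)
      (((isConcentratedOn_boolIndicator_range hmono hbdd).image
        (continuous_cantorFunction (by norm_num) (by norm_num))).preimage_val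
        (image_mono subset_union_right))
  · refine countable_of_injective_of_countable_image hcode (hc.mono ?_)
    rw [image_comp]
    exact image_mono subset_union_left

/-- every Rothberger set of reals is countable iff every SMZ set of reals is countable. -/
theorem bc_rothberger_iff_bc_smz :
    (∀ X : Set ℝ, RothbergerProp ↥X → X.Countable) ↔
      (∀ X : Set ℝ, StrongMeasureZero ↥X → X.Countable) := by
  refine ⟨fun hR X hX => ?_, fun hS X hX => hS X (strongMeasureZero_of_rothbergerProp hX)⟩
  by_contra hXc
  -- `hb` says that `𝔟 ≤ ℵ₁`.
  by_cases hb : ∃ F : Set (ℕ → ℕ), #F ≤ ℵ₁ ∧ ∀ g : ℕ → ℕ, ∃ f ∈ F, ¬ f ≤ᶠ[atTop] g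
  · obtain ⟨F, hF, hunb⟩ := hb
    obtain ⟨Z, hZ, hZc⟩ := exists_uncountable_rothbergerProp_of_unbounded hF hunb
    exact hZc (hR Z hZ)
  push Not at hb
  obtain ⟨Y, hYX, hY⟩ := le_mk_iff_exists_subset.mp <|
    aleph_one_le_iff.mpr (not_le.mp (mt le_aleph0_iff_set_countable.mp hXc))
  have hYc : ¬ Y.Countable := by
    rw [← le_aleph0_iff_set_countable, hY]
    exact aleph0_lt_aleph_one.not_ge
  have : Nonempty Y := (Set.Infinite.nonempty fun hfin => hYc hfin.countable).to_subtype
  have hYH : HurewiczProp Y := hurewiczProp_of_forall_bounded fun g => by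
    obtain ⟨g₀, hg₀⟩ := hb (range g) (mk_range_le.trans hY.le)
    exact ⟨g₀, fun y => hg₀ _ (mem_range_self y)⟩
  have hYS : StrongMeasureZero Y := hX.of_isometry (f := inclusion hYX) fun _ _ => rfl
  exact hYc (hR Y (rothbergerProp_of_hurewiczProp_of_strongMeasureZero hYH hYS))
end
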